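/- The set of df-1 loops of degree 2,…,min{I,J} on S connects every fiber of I × J zero-one tables of the quasi-independence model with structural zeros S: any two zero-one matrices supported on S with the same row sums and column sums can be connected by a path of df-1 loop moves through zero-one matrices supported on S. -/
import Mathlib

/-- degree-r loop (r = s+2): +1 at (i_k, j_k), −1 at (i_k, j_{k+1}) (indices mod r) -/
def loop {I J : ℕ} {s : ℕ} (i : Fin (s + 2) → Fin I) (j : Fin (s + 2) → Fin J) :
    Fin I → Fin J → ℤ :=
  fun a b => (∑ k, if a = i k ∧ b = j k then (1:ℤ) else 0)
           - (∑ k, if a = i k ∧ b = j (k + 1) then (1:ℤ) else 0)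

section Basic
variable {I J s : ℕ} {i : Fin (s + 2) → Fin I} {j : Fin (s + 2) → Fin J}

lemma fin_succ_ne (k : Fin (s + 2)) : k + 1 ≠ k := by
  intro h
  have h1 : (1 : Fin (s+2)) = 0 := by
    have := congrArg (fun t => t - k) h
    simpa using this
  have : ((1:Fin (s+2)) : ℕ) = 0 := by rw [h1]; rfl
  simp [Fin.val_one] at this

lemma loop_row_sum (i : Fin (s + 2) → Fin I) (j : Fin (s + 2) → Fin J) (a : Fin I) :
    ∑ b, loop i j a b = 0 := by
  unfold loop
  rw [Finset.sum_sub_distrib, Finset.sum_comm, Finset.sum_comm (s := Finset.univ (α := Fin J))]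
  have h1 : ∀ (c : Fin (s+2) → Fin J), (∑ k, ∑ b, if a = i k ∧ b = c k then (1:ℤ) else 0) = ∑ k, if a = i k then 1 else 0 := by
    intro c
    refine Finset.sum_congr rfl fun k _ => ?_
    by_cases h : a = i k <;> simp [h]
  rw [h1, h1, sub_self]

lemma loop_col_sum (i : Fin (s + 2) → Fin I) (j : Fin (s + 2) → Fin J) (b : Fin J) :
    ∑ a, loop i j a b = 0 := by
  unfold loop
  rw [Finset.sum_sub_distrib, Finset.sum_comm, Finset.sum_comm (s := Finset.univ (α := Fin I))]
  have h1 : ∀ (c : Fin (s+2) → Fin J), (∑ k, ∑ a, if a = i k ∧ b = c k then (1:ℤ) else 0) = ∑ k, if b = c k then 1 else 0 := by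
    intro c
    refine Finset.sum_congr rfl fun k _ => ?_
    by_cases h : b = c k <;> simp [h]
  rw [h1, h1, sub_eq_zero]
  exact Fintype.sum_equiv (Equiv.subRight 1) _ _ (fun k => by simp)

lemma loop_apply_off {a : Fin I} {b : Fin J}
    (h1 : ∀ k, ¬(a = i k ∧ b = j k)) (h2 : ∀ k, ¬(a = i k ∧ b = j (k+1))) :
    loop i j a b = 0 := by
  unfold loop
  rw [Finset.sum_eq_zero fun k _ => if_neg (h1 k), Finset.sum_eq_zero fun k _ => if_neg (h2 k), sub_self]

lemma loop_apply_plus (hi : Function.Injective i) (hj : Function.Injective j) (k : Fin (s+2)) :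
    loop i j (i k) (j k) = 1 := by
  unfold loop
  have e1 : (∑ m, if i k = i m ∧ j k = j m then (1:ℤ) else 0) = 1 := by
    rw [Finset.sum_eq_single k]
    · simp
    · intro m _ hm
      rw [if_neg]; rintro ⟨h1, -⟩; exact hm (hi h1).symm
    · simp
  have e2 : (∑ m, if i k = i m ∧ j k = j (m+1) then (1:ℤ) else 0) = 0 := by
    refine Finset.sum_eq_zero fun m _ => if_neg ?_
    rintro ⟨h1, h2⟩
    exact fin_succ_ne k (by rw [← hi h1] at h2; exact (hj h2).symm)
  rw [e1, e2, sub_zero]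

lemma loop_apply_minus (hi : Function.Injective i) (hj : Function.Injective j) (k : Fin (s+2)) :
    loop i j (i k) (j (k+1)) = -1 := by
  unfold loop
  have e1 : (∑ m, if i k = i m ∧ j (k+1) = j m then (1:ℤ) else 0) = 0 := by
    refine Finset.sum_eq_zero fun m _ => if_neg ?_
    rintro ⟨h1, h2⟩
    have hm : m = k + 1 := hj h2.symm
    rw [hm] at h1
    exact fin_succ_ne k (hi h1).symm
  have e2 : (∑ m, if i k = i m ∧ j (k+1) = j (m+1) then (1:ℤ) else 0) = 1 := by
    rw [Finset.sum_eq_single k]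
    · simp
    · intro m _ hm
      rw [if_neg]; rintro ⟨h1, -⟩; exact hm (hi h1).symm
    · simp
  rw [e1, e2]; ring

end Basic

section Apply
variable {I J s : ℕ} {S : Finset (Fin I × Fin J)}
  {i1 : Fin (s + 2) → Fin I} {j1 : Fin (s + 2) → Fin J}
  {x : Fin I → Fin J → ℤ}

/-- the cells of a loop: plus cells and minus cells are disjoint -/
lemma plus_ne_minus (hi : Function.Injective i1) (hj : Function.Injective j1)
    {t u : Fin (s+2)} : ¬(i1 t = i1 u ∧ j1 t = j1 (u + 1)) := by
  rintro ⟨h1, h2⟩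
  have := hi h1
  subst this
  exact fin_succ_ne t (hj h2).symm

/-- main "apply one loop to x" lemma -/
lemma apply_loop (hi : Function.Injective i1) (hj : Function.Injective j1)
    (hx01 : ∀ a b, x a b = 0 ∨ x a b = 1) (hxS : ∀ a b, (a, b) ∉ S → x a b = 0)
    (hplus : ∀ t, x (i1 t) (j1 t) = 1) (hminus : ∀ t, x (i1 t) (j1 (t+1)) = 0)
    (hS : ∀ t, (i1 t, j1 t) ∈ S ∧ (i1 t, j1 (t+1)) ∈ S)
    (x' : Fin I → Fin J → ℤ) (hx' : ∀ a b, x' a b = x a b - loop i1 j1 a b) :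
    (∀ a b, x' a b = 0 ∨ x' a b = 1) ∧ (∀ a b, (a, b) ∉ S → x' a b = 0) ∧
    (∀ t, x' (i1 t) (j1 t) = 0) ∧ (∀ t, x' (i1 t) (j1 (t+1)) = 1) ∧
    (∀ a b, (∀ t, ¬(a = i1 t ∧ b = j1 t)) → (∀ t, ¬(a = i1 t ∧ b = j1 (t+1))) → x' a b = x a b) ∧
    (∀ a, ∑ b, x' a b = ∑ b, x a b) ∧ (∀ b, ∑ a, x' a b = ∑ a, x a b) := by
  have hvp : ∀ t, x' (i1 t) (j1 t) = 0 := by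
    intro t; rw [hx']
    rw [loop_apply_plus hi hj, hplus]; ring
  have hvm : ∀ t, x' (i1 t) (j1 (t+1)) = 1 := by
    intro t; rw [hx']
    rw [loop_apply_minus hi hj, hminus]; ring
  have hoff : ∀ a b, (∀ t, ¬(a = i1 t ∧ b = j1 t)) → (∀ t, ¬(a = i1 t ∧ b = j1 (t+1))) → x' a b = x a b := by
    intro a b h1 h2; rw [hx']
    rw [loop_apply_off h1 h2]; ring
  have key : ∀ a b, (x' a b = 0 ∨ x' a b = 1) ∧ ((a,b) ∉ S → x' a b = 0) := by
    intro a b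
    by_cases h1 : ∃ t, a = i1 t ∧ b = j1 t
    · obtain ⟨t, rfl, rfl⟩ := h1
      exact ⟨Or.inl (hvp t), fun hn => absurd (hS t).1 hn⟩
    · by_cases h2 : ∃ t, a = i1 t ∧ b = j1 (t+1)
      · obtain ⟨t, rfl, rfl⟩ := h2
        exact ⟨Or.inr (hvm t), fun hn => absurd (hS t).2 hn⟩
      · push_neg at h1 h2
        have he := hoff a b (fun t ht => (h1 t ht.1) ht.2) (fun t ht => (h2 t ht.1) ht.2)
        rw [he]
        exact ⟨hx01 a b, hxS a b⟩
  refine ⟨fun a b => (key a b).1, fun a b => (key a b).2, hvp, hvm, hoff, ?_, ?_⟩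
  · intro a
    rw [Finset.sum_congr rfl fun b _ => hx' a b]
    rw [Finset.sum_sub_distrib, loop_row_sum, sub_zero]
  · intro b
    rw [Finset.sum_congr rfl fun a _ => hx' a b]
    rw [Finset.sum_sub_distrib, loop_col_sum, sub_zero]

end Apply

section Cycle
variable {I J : ℕ} {d : Fin I → Fin J → ℤ}

lemma exists_pos_of_sum_zero {α : Type*} [Fintype α] {f : α → ℤ}
    (h0 : ∑ a, f a = 0) {a0 : α} (ha : f a0 < 0) : ∃ a, 0 < f a := by
  by_contra h
  push_neg at h
  have : ∑ a, f a < ∑ a : α, (0:ℤ) :=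
    Finset.sum_lt_sum (fun a _ => h a) ⟨a0, Finset.mem_univ _, ha⟩
  simp [h0] at this

lemma exists_neg_of_sum_zero {α : Type*} [Fintype α] {f : α → ℤ}
    (h0 : ∑ a, f a = 0) {a0 : α} (ha : 0 < f a0) : ∃ a, f a < 0 := by
  obtain ⟨a, hha⟩ := exists_pos_of_sum_zero (f := fun a => -f a) (by simp [h0]) (a0 := a0) (by simpa using ha)
  exact ⟨a, by linarith⟩

/-- cleanup: from any closed alternating walk, get one with distinct rows and columns -/
lemma cleanup : ∀ (N n : ℕ), n < N → ∀ (i0 : Fin (n+1) → Fin I) (j0 : Fin (n+1) → Fin J),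
    (∀ t, 0 < d (i0 t) (j0 t)) → (∀ t, d (i0 t) (j0 (t + 1)) < 0) →
    ∃ (s : ℕ) (i : Fin (s+2) → Fin I) (j : Fin (s+2) → Fin J),
      Function.Injective i ∧ Function.Injective j ∧
      ∀ k, 0 < d (i k) (j k) ∧ d (i k) (j (k+1)) < 0 := by
  intro N
  induction N with
  | zero => omega
  | succ N IH =>
    intro n hn i0 j0 hpos hneg
    -- the case n = 0 : contradiction
    rcases Nat.eq_zero_or_pos n with rfl | hn1
    · exfalso
      have h1 := hpos 0
      have h2 := hneg 0
      have : (0 + 1 : Fin 1) = 0 := Subsingleton.elim _ _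
      rw [this] at h2
      linarith
    by_cases hii : Function.Injective i0
    · by_cases hjj : Function.Injective j0
      · -- done: n + 1 = (n-1) + 2
        obtain ⟨s, rfl⟩ : ∃ s, n = s + 1 := ⟨n - 1, by omega⟩
        exact ⟨s, i0, j0, hii, hjj, fun k => ⟨hpos k, hneg k⟩⟩
      · -- repeated column: splice
        obtain ⟨a, b, heq, hne⟩ := Function.not_injective_iff.1 hjj
        set r' := (a - b).val with hr'def
        have hr'pos : 1 ≤ r' := by
          rcases Nat.eq_zero_or_pos r' with h | h
          · exact absurd (sub_eq_zero.1 (Fin.ext h)) hne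
          · exact h
        have hr'lt : r' < n + 1 := (a - b).isLt
        obtain ⟨n', hn'⟩ : ∃ n', r' = n' + 1 := ⟨r' - 1, by omega⟩
        have hbd : ∀ t : Fin (n'+1), t.val < n + 1 := fun t => by omega
        set e : Fin (n'+1) → Fin (n+1) := fun t => ⟨t.val, hbd t⟩ with hedef
        have he_succ : ∀ t : Fin (n'+1), t.val + 1 < n' + 1 → e (t+1) = e t + 1 := by
          intro t ht
          have h1 : (t+1).val = t.val + 1 := Fin.val_add_one_of_lt (by
            rw [Fin.lt_iff_val_lt_val, Fin.val_last]; omega)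
          have h2 : (e t + 1).val = t.val + 1 := by
            have : e t < Fin.last n := by
              rw [Fin.lt_iff_val_lt_val, Fin.val_last]
              show t.val < n; omega
            rw [Fin.val_add_one_of_lt this]
          exact Fin.ext (by rw [h2]; show (t+1).val = _; rw [h1])
        have he_last : ∀ t : Fin (n'+1), t.val = n' → e t + 1 = a - b := by
          intro t ht
          have h2 : (e t + 1).val = t.val + 1 := by
            have : e t < Fin.last n := by
              rw [Fin.lt_iff_val_lt_val, Fin.val_last]
              show t.val < n; omega
            rw [Fin.val_add_one_of_lt this]
          exact Fin.ext (by rw [h2]; show t.val + 1 = r'; omega)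
        have hwrap : ∀ t : Fin (n'+1), t.val = n' → t + 1 = 0 := by
          intro t ht
          have : t = Fin.last n' := Fin.ext (by simpa using ht)
          rw [this, Fin.last_add_one]
        refine IH n' (by omega) (fun t => i0 (b + e t)) (fun t => j0 (b + e t))
          (fun t => hpos _) ?_
        intro t
        show d (i0 (b + e t)) (j0 (b + e (t+1))) < 0
        by_cases ht : t.val + 1 < n' + 1
        · rw [he_succ t ht, ← add_assoc]
          exact hneg (b + e t)
        · have htl : t.val = n' := by omega
          rw [hwrap t htl]
          have h0 : e (0 : Fin (n'+1)) = 0 := Fin.ext (by simp [hedef])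
          rw [h0, add_zero]
          have key : b + e t + 1 = a := by
            rw [add_assoc, he_last t htl]
            abel
          have := hneg (b + e t)
          rw [key] at this
          rw [heq] at this
          exact this
    · -- repeated row: splice
      obtain ⟨a, b, heq, hne⟩ := Function.not_injective_iff.1 hii
      set r' := (a - b).val with hr'def
      have hr'pos : 1 ≤ r' := by
        rcases Nat.eq_zero_or_pos r' with h | h
        · exact absurd (sub_eq_zero.1 (Fin.ext h)) hne
        · exact h
      have hr'lt : r' < n + 1 := (a - b).isLt
      obtain ⟨n', hn'⟩ : ∃ n', r' = n' + 1 := ⟨r' - 1, by omega⟩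
      have hbd : ∀ t : Fin (n'+1), t.val < n + 1 := fun t => by omega
      set e : Fin (n'+1) → Fin (n+1) := fun t => ⟨t.val, hbd t⟩ with hedef
      have he_succ : ∀ t : Fin (n'+1), t.val + 1 < n' + 1 → e (t+1) = e t + 1 := by
        intro t ht
        have h1 : (t+1).val = t.val + 1 := Fin.val_add_one_of_lt (by
          rw [Fin.lt_iff_val_lt_val, Fin.val_last]; omega)
        have h2 : (e t + 1).val = t.val + 1 := by
          have : e t < Fin.last n := by
            rw [Fin.lt_iff_val_lt_val, Fin.val_last]
            show t.val < n; omega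
          rw [Fin.val_add_one_of_lt this]
        exact Fin.ext (by rw [h2]; show (t+1).val = _; rw [h1])
      have he_last : ∀ t : Fin (n'+1), t.val = n' → (1 : Fin (n+1)) + e t = a - b := by
        intro t ht
        have h2 : (e t + 1).val = t.val + 1 := by
          have : e t < Fin.last n := by
            rw [Fin.lt_iff_val_lt_val, Fin.val_last]
            show t.val < n; omega
          rw [Fin.val_add_one_of_lt this]
        rw [add_comm 1 (e t)]
        exact Fin.ext (by rw [h2]; show t.val + 1 = r'; omega)
      have hwrap : ∀ t : Fin (n'+1), t.val = n' → t + 1 = 0 := by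
        intro t ht
        have : t = Fin.last n' := Fin.ext (by simpa using ht)
        rw [this, Fin.last_add_one]
      refine IH n' (by omega) (fun t => i0 (b + 1 + e t)) (fun t => j0 (b + 1 + e t))
        (fun t => hpos _) ?_
      intro t
      show d (i0 (b + 1 + e t)) (j0 (b + 1 + e (t+1))) < 0
      by_cases ht : t.val + 1 < n' + 1
      · rw [he_succ t ht, ← add_assoc]
        exact hneg (b + 1 + e t)
      · have htl : t.val = n' := by omega
        rw [hwrap t htl]
        have h0 : e (0 : Fin (n'+1)) = 0 := Fin.ext (by simp [hedef])
        rw [h0, add_zero]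
        have key : b + 1 + e t = a := by
          rw [add_assoc, he_last t htl]
          abel
        rw [key, heq]
        exact hneg b

lemma exists_cycle (hrow : ∀ a, ∑ b, d a b = 0) (hcol : ∀ b, ∑ a, d a b = 0)
    {a0 : Fin I} {b0 : Fin J} (h0 : d a0 b0 ≠ 0) :
    ∃ (s : ℕ) (i : Fin (s+2) → Fin I) (j : Fin (s+2) → Fin J),
      Function.Injective i ∧ Function.Injective j ∧
      ∀ k, 0 < d (i k) (j k) ∧ d (i k) (j (k+1)) < 0 := by
  -- a starting positive cell
  have hstart : ∃ p : Fin I × Fin J, 0 < d p.1 p.2 := by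
    rcases lt_or_gt_of_ne h0 with h | h
    · obtain ⟨b, hb⟩ := exists_pos_of_sum_zero (hrow a0) h
      exact ⟨(a0, b), hb⟩
    · exact ⟨(a0, b0), h⟩
  obtain ⟨p0, hp0⟩ := hstart
  -- the step function
  have hstep : ∀ p : {p : Fin I × Fin J // 0 < d p.1 p.2},
      ∃ q : {q : Fin I × Fin J // 0 < d q.1 q.2}, d p.1.1 q.1.2 < 0 := by
    rintro ⟨⟨a, b⟩, hp⟩
    obtain ⟨b', hb'⟩ := exists_neg_of_sum_zero (hrow a) hp
    obtain ⟨a', ha'⟩ := exists_pos_of_sum_zero (hcol b') hb'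
    exact ⟨⟨(a', b'), ha'⟩, hb'⟩
  choose nxt hnxt using hstep
  set seq : ℕ → {p : Fin I × Fin J // 0 < d p.1 p.2} := fun n => nxt^[n] ⟨p0, hp0⟩ with hseq
  have hlink : ∀ n, d (seq n).1.1 (seq (n+1)).1.2 < 0 := by
    intro n
    have : seq (n+1) = nxt (seq n) := Function.iterate_succ_apply' _ _ _
    rw [this]
    exact hnxt (seq n)
  -- pigeonhole
  obtain ⟨m, u, hne, heq⟩ := Finite.exists_ne_map_eq_of_infinite seq
  wlog hmu : m < u generalizing m u
  · exact this u m hne.symm heq.symm (by omega)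
  obtain ⟨n, hnn⟩ : ∃ n, u - m = n + 1 := ⟨u - m - 1, by omega⟩
  refine cleanup (n+1) n (by omega) (fun t => (seq (m + t.val)).1.1) (fun t => (seq (m + t.val)).1.2)
    (fun t => (seq (m + t.val)).2) ?_
  intro t
  show d (seq (m + t.val)).1.1 (seq (m + (t+1).val)).1.2 < 0
  by_cases ht : t.val + 1 < n + 1
  · have h1 : (t+1).val = t.val + 1 := Fin.val_add_one_of_lt (by
      rw [Fin.lt_iff_val_lt_val, Fin.val_last]; omega)
    rw [h1, ← add_assoc]
    exact hlink (m + t.val)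
  · have htl : t = Fin.last n := Fin.ext (by simp; omega)
    have h1 : (t+1).val = 0 := by rw [htl, Fin.last_add_one]; rfl
    rw [h1]
    have h2 : m + 0 = m := rfl
    have h3 : (seq m).1.2 = (seq u).1.2 := by rw [heq]
    rw [h2, h3]
    have h4 : m + t.val + 1 = u := by rw [htl]; simp; omega
    have := hlink (m + t.val)
    rw [h4] at this
    exact this

end Cycle

section Accounting
variable {I J s : ℕ}

lemma sum_compare {α : Type*} [Fintype α] [DecidableEq α] (f g : α → ℕ) (ch c1 c2 : α)
    (h1 : c1 ≠ ch) (h2 : c2 ≠ ch) (h12 : c1 ≠ c2)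
    (hle : ∀ c, c ≠ ch → g c ≤ f c) (hch : g ch ≤ f ch + 1)
    (hc1 : g c1 < f c1) (hc2 : g c2 < f c2) : ∑ c, g c < ∑ c, f c := by
  classical
  have m1 : ch ∈ Finset.univ (α := α) := Finset.mem_univ _
  have m2 : c1 ∈ Finset.univ.erase ch := Finset.mem_erase.2 ⟨h1, Finset.mem_univ _⟩
  have m3 : c2 ∈ (Finset.univ.erase ch).erase c1 :=
    Finset.mem_erase.2 ⟨h12.symm, Finset.mem_erase.2 ⟨h2, Finset.mem_univ _⟩⟩
  have e1 : ∀ (h : α → ℕ), ∑ c, h c = h ch + ∑ c ∈ Finset.univ.erase ch, h c :=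
    fun h => (Finset.add_sum_erase _ h m1).symm
  have e2 : ∀ (h : α → ℕ), ∑ c ∈ Finset.univ.erase ch, h c
      = h c1 + ∑ c ∈ (Finset.univ.erase ch).erase c1, h c :=
    fun h => (Finset.add_sum_erase _ h m2).symm
  have e3 : ∀ (h : α → ℕ), ∑ c ∈ (Finset.univ.erase ch).erase c1, h c
      = h c2 + ∑ c ∈ ((Finset.univ.erase ch).erase c1).erase c2, h c :=
    fun h => (Finset.add_sum_erase _ h m3).symm
  have hrest : ∑ c ∈ ((Finset.univ.erase ch).erase c1).erase c2, g c
      ≤ ∑ c ∈ ((Finset.univ.erase ch).erase c1).erase c2, f c := by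
    refine Finset.sum_le_sum fun c hc => hle c ?_
    have := Finset.mem_erase.1 (Finset.mem_erase.1 hc).2
    exact (Finset.mem_erase.1 this.2).1
  rw [e1 g, e1 f, e2 g, e2 f, e3 g, e3 f]
  omega

lemma loop_l1_bound (i : Fin (s + 2) → Fin I) (j : Fin (s + 2) → Fin J) :
    ∑ c : Fin I × Fin J, (loop i j c.1 c.2).natAbs ≤ 2 * (s + 2) := by
  classical
  have hcell : ∀ (i0 : Fin I) (j0 : Fin J),
      ∑ c : Fin I × Fin J, (if c.1 = i0 ∧ c.2 = j0 then (1:ℕ) else 0) = 1 := by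
    intro i0 j0
    have : ∀ c : Fin I × Fin J, (c.1 = i0 ∧ c.2 = j0) ↔ (c = (i0, j0)) := by
      intro c; rw [Prod.ext_iff]
    rw [Finset.sum_congr rfl fun c _ => if_congr (this c) rfl rfl]
    simp
  have hb : ∀ c : Fin I × Fin J, (loop i j c.1 c.2).natAbs ≤
      (∑ k, if c.1 = i k ∧ c.2 = j k then (1:ℕ) else 0) +
      (∑ k, if c.1 = i k ∧ c.2 = j (k+1) then (1:ℕ) else 0) := by
    intro c
    have h1 : (∑ k, if c.1 = i k ∧ c.2 = j k then (1:ℤ) else 0)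
        = ((∑ k, if c.1 = i k ∧ c.2 = j k then (1:ℕ) else 0 : ℕ) : ℤ) := by
      push_cast; rfl
    have h2 : (∑ k, if c.1 = i k ∧ c.2 = j (k+1) then (1:ℤ) else 0)
        = ((∑ k, if c.1 = i k ∧ c.2 = j (k+1) then (1:ℕ) else 0 : ℕ) : ℤ) := by
      push_cast; rfl
    calc (loop i j c.1 c.2).natAbs
        ≤ (∑ k, if c.1 = i k ∧ c.2 = j k then (1:ℤ) else 0).natAbs
          + (∑ k, if c.1 = i k ∧ c.2 = j (k+1) then (1:ℤ) else 0).natAbs :=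
          Int.natAbs_sub_le _ _
      _ = _ := by rw [h1, h2, Int.natAbs_natCast, Int.natAbs_natCast]
  calc ∑ c : Fin I × Fin J, (loop i j c.1 c.2).natAbs
      ≤ ∑ c : Fin I × Fin J, ((∑ k, if c.1 = i k ∧ c.2 = j k then (1:ℕ) else 0) +
        (∑ k, if c.1 = i k ∧ c.2 = j (k+1) then (1:ℕ) else 0)) :=
        Finset.sum_le_sum fun c _ => hb c
    _ = (∑ c : Fin I × Fin J, ∑ k, if c.1 = i k ∧ c.2 = j k then (1:ℕ) else 0) +
        (∑ c : Fin I × Fin J, ∑ k, if c.1 = i k ∧ c.2 = j (k+1) then (1:ℕ) else 0) :=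
        Finset.sum_add_distrib
    _ = (∑ k, ∑ c : Fin I × Fin J, if c.1 = i k ∧ c.2 = j k then (1:ℕ) else 0) +
        (∑ k, ∑ c : Fin I × Fin J, if c.1 = i k ∧ c.2 = j (k+1) then (1:ℕ) else 0) := by
        rw [Finset.sum_comm, Finset.sum_comm (s := Finset.univ (α := Fin I × Fin J))]
    _ = (s+2) + (s+2) := by
        rw [Finset.sum_congr rfl fun k _ => hcell (i k) (j k),
          Finset.sum_congr rfl fun k _ => hcell (i k) (j (k+1))]
        simp [mul_comm]
    _ ≤ 2 * (s + 2) := by omega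

lemma loop_l1_lower {i : Fin (s + 2) → Fin I} {j : Fin (s + 2) → Fin J}
    (hi : Function.Injective i) (hj : Function.Injective j)
    (f : Fin I × Fin J → ℕ)
    (hfp : ∀ k, 1 ≤ f (i k, j k)) (hfm : ∀ k, 1 ≤ f (i k, j (k+1))) :
    2 * (s + 2) ≤ ∑ c, f c := by
  classical
  set T1 : Finset (Fin I × Fin J) := Finset.image (fun k => (i k, j k)) Finset.univ with hT1
  set T2 : Finset (Fin I × Fin J) := Finset.image (fun k => (i k, j (k+1))) Finset.univ with hT2
  have hd : Disjoint T1 T2 := by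
    rw [Finset.disjoint_left]
    intro c hc1 hc2
    obtain ⟨t, _, ht⟩ := Finset.mem_image.1 hc1
    obtain ⟨u, _, hu⟩ := Finset.mem_image.1 hc2
    rw [← ht] at hu
    have h1 : i t = i u := congrArg Prod.fst hu.symm
    have h2 : j t = j (u+1) := congrArg Prod.snd hu.symm
    exact plus_ne_minus hi hj ⟨h1, h2⟩
  have hcard1 : T1.card = s + 2 := by
    rw [hT1, Finset.card_image_of_injective _ (fun a b h => hi (congrArg Prod.fst h))]
    simp
  have hcard2 : T2.card = s + 2 := by
    rw [hT2, Finset.card_image_of_injective _ (fun a b h => hi (congrArg Prod.fst h))]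
    simp
  have hsub : T1 ∪ T2 ⊆ Finset.univ := Finset.subset_univ _
  calc 2 * (s + 2) = (T1 ∪ T2).card := by
        rw [Finset.card_union_of_disjoint hd, hcard1, hcard2]; ring
    _ = ∑ _c ∈ T1 ∪ T2, 1 := by rw [Finset.card_eq_sum_ones]
    _ ≤ ∑ c ∈ T1 ∪ T2, f c := by
        refine Finset.sum_le_sum fun c hc => ?_
        rcases Finset.mem_union.1 hc with h | h
        · obtain ⟨t, _, ht⟩ := Finset.mem_image.1 h
          rw [← ht]; exact hfp t
        · obtain ⟨t, _, ht⟩ := Finset.mem_image.1 h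
          rw [← ht]; exact hfm t
    _ ≤ ∑ c, f c := Finset.sum_le_sum_of_subset hsub

end Accounting

/-- df-1 loop on S: a loop on S whose rectangle contains exactly two cells of S in
each of its rows and columns -/
def df1Loop {I J : ℕ} (S : Finset (Fin I × Fin J)) (z : Fin I → Fin J → ℤ) : Prop :=
  ∃ (s : ℕ) (i : Fin (s + 2) → Fin I) (j : Fin (s + 2) → Fin J),
    Function.Injective i ∧ Function.Injective j ∧
    (∀ k, (i k, j k) ∈ S ∧ (i k, j (k + 1)) ∈ S) ∧
    (∀ k, (Finset.univ.filter (fun l => (i k, j l) ∈ S)).card = 2) ∧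
    (∀ l, (Finset.univ.filter (fun k => (i k, j l) ∈ S)).card = 2) ∧
    z = loop i j

/-- one step: add or subtract a df-1 loop, staying zero-one and supported on S -/
def df1Step {I J : ℕ} (S : Finset (Fin I × Fin J))
    (x x' : Fin I → Fin J → ℤ) : Prop :=
  (∀ i j, x' i j = 0 ∨ x' i j = 1) ∧ (∀ i j, (i, j) ∉ S → x' i j = 0) ∧
  ∃ z, df1Loop S z ∧ (x' = x + z ∨ x' = x - z)

section Main
variable {I J : ℕ} {S : Finset (Fin I × Fin J)}

set_option maxHeartbeats 1600000 in
/-- one "detour via a smaller (not necessarily df-1) loop" step in the chord case -/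
lemma chord_step {n s' : ℕ} {x y : Fin I → Fin J → ℤ}
    {i1 : Fin (s' + 2) → Fin I} {j1 : Fin (s' + 2) → Fin J}
    (IH : ∀ x y : Fin I → Fin J → ℤ,
      (∀ a b, x a b = 0 ∨ x a b = 1) → (∀ a b, y a b = 0 ∨ y a b = 1) →
      (∀ a b, (a, b) ∉ S → x a b = 0) → (∀ a b, (a, b) ∉ S → y a b = 0) →
      (∀ a, ∑ b, x a b = ∑ b, y a b) → (∀ b, ∑ a, x a b = ∑ a, y a b) →
      (∑ c : Fin I × Fin J, (x c.1 c.2 - y c.1 c.2).natAbs) < n →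
      Relation.ReflTransGen (df1Step S) x y)
    (hx01 : ∀ a b, x a b = 0 ∨ x a b = 1) (hy01 : ∀ a b, y a b = 0 ∨ y a b = 1)
    (hxS : ∀ a b, (a, b) ∉ S → x a b = 0) (hyS : ∀ a b, (a, b) ∉ S → y a b = 0)
    (hrow : ∀ a, ∑ b, x a b = ∑ b, y a b) (hcol : ∀ b, ∑ a, x a b = ∑ a, y a b)
    (hn : (∑ c : Fin I × Fin J, (x c.1 c.2 - y c.1 c.2).natAbs) < n + 1)
    (hi1 : Function.Injective i1) (hj1 : Function.Injective j1)
    (hS1 : ∀ t, (i1 t, j1 t) ∈ S ∧ (i1 t, j1 (t+1)) ∈ S)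
    (hplus : ∀ t, x (i1 t) (j1 t) = 1) (hminus : ∀ t, x (i1 t) (j1 (t+1)) = 0)
    (ch c1 c2 : Fin I × Fin J)
    (hyplus : ∀ t, (i1 t, j1 t) ≠ ch → y (i1 t) (j1 t) = 0)
    (hyminus : ∀ t, (i1 t, j1 (t+1)) ≠ ch → y (i1 t) (j1 (t+1)) = 1)
    (hc1 : (∃ t, c1 = (i1 t, j1 t) ∧ y c1.1 c1.2 = 0) ∨
           (∃ t, c1 = (i1 t, j1 (t+1)) ∧ y c1.1 c1.2 = 1))
    (hc2 : (∃ t, c2 = (i1 t, j1 t) ∧ y c2.1 c2.2 = 0) ∨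
           (∃ t, c2 = (i1 t, j1 (t+1)) ∧ y c2.1 c2.2 = 1))
    (hne1 : c1 ≠ ch) (hne2 : c2 ≠ ch) (hne12 : c1 ≠ c2)
    (hbound : 2 * (s' + 2) < ∑ c : Fin I × Fin J, (x c.1 c.2 - y c.1 c.2).natAbs) :
    Relation.ReflTransGen (df1Step S) x y := by
  classical
  set x' : Fin I → Fin J → ℤ := fun a b => x a b - loop i1 j1 a b with hx'def
  obtain ⟨h'01, h'S, h'p, h'm, h'off, h'row, h'col⟩ :=
    apply_loop hi1 hj1 hx01 hxS hplus hminus hS1 x' (fun a b => rfl)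
  -- measure from x to x'
  have hdx : ∀ c : Fin I × Fin J, x c.1 c.2 - x' c.1 c.2 = loop i1 j1 c.1 c.2 := by
    intro c; show x _ _ - (x _ _ - loop _ _ _ _) = _; ring
  have hm1 : (∑ c : Fin I × Fin J, (x c.1 c.2 - x' c.1 c.2).natAbs) < n := by
    calc (∑ c : Fin I × Fin J, (x c.1 c.2 - x' c.1 c.2).natAbs)
        = ∑ c : Fin I × Fin J, (loop i1 j1 c.1 c.2).natAbs :=
          Finset.sum_congr rfl fun c _ => by rw [hdx c]
      _ ≤ 2 * (s' + 2) := loop_l1_bound i1 j1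
      _ < ∑ c : Fin I × Fin J, (x c.1 c.2 - y c.1 c.2).natAbs := hbound
      _ ≤ n := by omega
  -- measure from x' to y
  have key : ∀ c : Fin I × Fin J, c ≠ ch →
      (x' c.1 c.2 - y c.1 c.2).natAbs ≤ (x c.1 c.2 - y c.1 c.2).natAbs := by
    intro c hc
    by_cases hp : ∃ t, c = (i1 t, j1 t)
    · obtain ⟨t, rfl⟩ := hp
      show (x' (i1 t) (j1 t) - y (i1 t) (j1 t)).natAbs ≤ (x (i1 t) (j1 t) - y (i1 t) (j1 t)).natAbs
      rw [h'p t, hyplus t hc]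
      simp
    · by_cases hm : ∃ t, c = (i1 t, j1 (t+1))
      · obtain ⟨t, rfl⟩ := hm
        show (x' (i1 t) (j1 (t+1)) - y (i1 t) (j1 (t+1))).natAbs ≤ (x (i1 t) (j1 (t+1)) - y (i1 t) (j1 (t+1))).natAbs
        rw [h'm t, hyminus t hc]
        simp
      · push_neg at hp hm
        have : x' c.1 c.2 = x c.1 c.2 := by
          have := h'off c.1 c.2 (fun t ht => hp t (Prod.ext ht.1 ht.2))
            (fun t ht => hm t (Prod.ext ht.1 ht.2))
          exact this
        rw [this]
  have hstrict : ∀ c : Fin I × Fin J,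
      ((∃ t, c = (i1 t, j1 t) ∧ y c.1 c.2 = 0) ∨
       (∃ t, c = (i1 t, j1 (t+1)) ∧ y c.1 c.2 = 1)) →
      (x' c.1 c.2 - y c.1 c.2).natAbs < (x c.1 c.2 - y c.1 c.2).natAbs := by
    rintro c (⟨t, rfl, hy⟩ | ⟨t, rfl, hy⟩)
    · show (x' (i1 t) (j1 t) - y (i1 t) (j1 t)).natAbs < (x (i1 t) (j1 t) - y (i1 t) (j1 t)).natAbs
      rw [h'p t, show y (i1 t) (j1 t) = 0 from hy, hplus t]; simp
    · show (x' (i1 t) (j1 (t+1)) - y (i1 t) (j1 (t+1))).natAbs < (x (i1 t) (j1 (t+1)) - y (i1 t) (j1 (t+1))).natAbs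
      rw [h'm t, show y (i1 t) (j1 (t+1)) = 1 from hy, hminus t]; simp
  have hchb : (x' ch.1 ch.2 - y ch.1 ch.2).natAbs ≤ (x ch.1 ch.2 - y ch.1 ch.2).natAbs + 1 := by
    rcases h'01 ch.1 ch.2 with h | h <;> rcases hy01 ch.1 ch.2 with h2 | h2 <;>
      rw [h, h2] <;> simp
  have hm2 : (∑ c : Fin I × Fin J, (x' c.1 c.2 - y c.1 c.2).natAbs) < n := by
    have h2 : (∑ c : Fin I × Fin J, (x' c.1 c.2 - y c.1 c.2).natAbs)
        < (∑ c : Fin I × Fin J, (x c.1 c.2 - y c.1 c.2).natAbs) :=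
      by
        exact sum_compare (fun c => (x c.1 c.2 - y c.1 c.2).natAbs)
          (fun c => (x' c.1 c.2 - y c.1 c.2).natAbs) ch c1 c2 hne1 hne2 hne12 key hchb (hstrict c1 hc1) (hstrict c2 hc2)
    omega
  -- two applications of the induction hypothesis
  have r1 : Relation.ReflTransGen (df1Step S) x x' :=
    IH x x' hx01 h'01 hxS h'S (fun a => (h'row a).symm) (fun b => (h'col b).symm) hm1
  have r2 : Relation.ReflTransGen (df1Step S) x' y :=
    IH x' y h'01 hy01 h'S hyS (fun a => (h'row a).trans (hrow a))
      (fun b => (h'col b).trans (hcol b)) hm2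
  exact r1.trans r2

end Main

set_option maxHeartbeats 1600000 in
theorem stmt17 {I J : ℕ} (S : Finset (Fin I × Fin J))
    (x y : Fin I → Fin J → ℤ)
    (hx01 : ∀ i j, x i j = 0 ∨ x i j = 1) (hy01 : ∀ i j, y i j = 0 ∨ y i j = 1)
    (hxS : ∀ i j, (i, j) ∉ S → x i j = 0) (hyS : ∀ i j, (i, j) ∉ S → y i j = 0)
    (hrow : ∀ i, ∑ j, x i j = ∑ j, y i j)
    (hcol : ∀ j, ∑ i, x i j = ∑ i, y i j) :
    Relation.ReflTransGen (df1Step S) x y := by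
  classical
  suffices H : ∀ (n : ℕ), ∀ x y : Fin I → Fin J → ℤ,
      (∀ a b, x a b = 0 ∨ x a b = 1) → (∀ a b, y a b = 0 ∨ y a b = 1) →
      (∀ a b, (a, b) ∉ S → x a b = 0) → (∀ a b, (a, b) ∉ S → y a b = 0) →
      (∀ a, ∑ b, x a b = ∑ b, y a b) → (∀ b, ∑ a, x a b = ∑ a, y a b) →
      (∑ c : Fin I × Fin J, (x c.1 c.2 - y c.1 c.2).natAbs) < n →
      Relation.ReflTransGen (df1Step S) x y by
    exact H ((∑ c : Fin I × Fin J, (x c.1 c.2 - y c.1 c.2).natAbs) + 1) x y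
      hx01 hy01 hxS hyS hrow hcol (Nat.lt_succ_self _)
  intro n
  induction n with
  | zero => intro x y _ _ _ _ _ _ h; exact absurd h (Nat.not_lt_zero _)
  | succ n IH =>
    intro x y hx01 hy01 hxS hyS hrow hcol hN
    by_cases hxy : x = y
    · subst hxy; exact Relation.ReflTransGen.refl
    have hdne : ∃ a b, x a b - y a b ≠ 0 := by
      by_contra h
      push_neg at h
      exact hxy (funext fun a => funext fun b => by have := h a b; omega)
    obtain ⟨a0, b0, hd0⟩ := hdne
    have hrowd : ∀ a, ∑ b, (x a b - y a b) = 0 := fun a => by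
      rw [Finset.sum_sub_distrib, hrow a, sub_self]
    have hcold : ∀ b, ∑ a, (x a b - y a b) = 0 := fun b => by
      rw [Finset.sum_sub_distrib, hcol b, sub_self]
    obtain ⟨s, i, j, hi, hj, hcyc⟩ :=
      exists_cycle (d := fun a b => x a b - y a b) hrowd hcold hd0
    have hxp : ∀ k, x (i k) (j k) = 1 := fun k => by
      have := (hcyc k).1
      rcases hx01 (i k) (j k) with h|h <;> rcases hy01 (i k) (j k) with h2|h2 <;> omega
    have hyp : ∀ k, y (i k) (j k) = 0 := fun k => by
      have := (hcyc k).1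
      rcases hx01 (i k) (j k) with h|h <;> rcases hy01 (i k) (j k) with h2|h2 <;> omega
    have hxm : ∀ k, x (i k) (j (k+1)) = 0 := fun k => by
      have := (hcyc k).2
      rcases hx01 (i k) (j (k+1)) with h|h <;> rcases hy01 (i k) (j (k+1)) with h2|h2 <;> omega
    have hym : ∀ k, y (i k) (j (k+1)) = 1 := fun k => by
      have := (hcyc k).2
      rcases hx01 (i k) (j (k+1)) with h|h <;> rcases hy01 (i k) (j (k+1)) with h2|h2 <;> omega
    have hSp : ∀ k, (i k, j k) ∈ S := fun k => by
      by_contra h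
      have := hxS _ _ h
      rw [hxp k] at this
      exact one_ne_zero this
    have hSm : ∀ k, (i k, j (k+1)) ∈ S := fun k => by
      by_contra h
      have := hyS _ _ h
      rw [hym k] at this
      exact one_ne_zero this
    have hNlow : 2 * (s+2) ≤ ∑ c : Fin I × Fin J, (x c.1 c.2 - y c.1 c.2).natAbs := by
      refine loop_l1_lower hi hj _ (fun k => ?_) (fun k => ?_)
      · show 1 ≤ (x (i k) (j k) - y (i k) (j k)).natAbs
        rw [hxp k, hyp k]; simp
      · show 1 ≤ (x (i k) (j (k+1)) - y (i k) (j (k+1))).natAbs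
        rw [hxm k, hym k]; simp
    by_cases hch : ∃ k l, (i k, j l) ∈ S ∧ l ≠ k ∧ l ≠ k + 1
    · obtain ⟨k, l, hklS, hlk, hlk1⟩ := hch
      rcases hx01 (i k) (j l) with hx0 | hx1
      · -- chord has x-value 0 : use the loop through rows l..k
        have hklval : 1 ≤ (k - l).val := by
          rcases Nat.eq_zero_or_pos (k-l).val with h|h
          · exact absurd (sub_eq_zero.1 (Fin.ext h)).symm hlk
          · exact h
        have hkls : (k - l).val ≤ s := by
          by_contra h
          have hv : (k - l).val = s + 1 := by have := (k-l).isLt; omega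
          have h2 : k - l = Fin.last (s+1) := Fin.ext (by simpa using hv)
          have h4 : Fin.last (s+1) + 1 = (0 : Fin (s+2)) := Fin.last_add_one _
          have h3 : k + 1 = l := by
            calc k + 1 = l + (k - l) + 1 := by rw [add_sub_cancel]
              _ = l + (Fin.last (s+1) + 1) := by rw [h2]; abel
              _ = l := by rw [h4, add_zero]
          exact hlk1 h3.symm
        set s1 := (k - l).val - 1 with hs1def
        have hr1 : s1 + 2 = (k - l).val + 1 := by omega
        have hbd1 : ∀ t : Fin (s1+2), t.val < s + 2 := fun t => by
          have := t.isLt; omega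
        set e1 : Fin (s1+2) → Fin (s+2) := fun t => ⟨t.val, hbd1 t⟩ with he1def
        set i1 : Fin (s1+2) → Fin I := fun t => i (l + e1 t) with hi1def
        set j1 : Fin (s1+2) → Fin J := fun t => j (l + e1 t) with hj1def
        have hinj_e : ∀ t t', e1 t = e1 t' → t = t' := by
          intro t t' h
          have h2 := congrArg Fin.val h
          exact Fin.ext h2
        have hi1 : Function.Injective i1 :=
          fun t t' h => hinj_e _ _ (add_left_cancel (hi h))
        have hj1 : Function.Injective j1 :=
          fun t t' h => hinj_e _ _ (add_left_cancel (hj h))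
        have hsucc : ∀ t : Fin (s1+2), t.val + 1 < s1 + 2 → e1 (t + 1) = e1 t + 1 := by
          intro t ht
          have h1 : (t+1).val = t.val + 1 := Fin.val_add_one_of_lt (by
            rw [Fin.lt_iff_val_lt_val, Fin.val_last]; omega)
          have h2 : (e1 t + 1).val = t.val + 1 := by
            have : e1 t < Fin.last (s+1) := by
              rw [Fin.lt_iff_val_lt_val, Fin.val_last]
              show t.val < s + 1; omega
            rw [Fin.val_add_one_of_lt this]
          exact Fin.ext (by rw [h2]; show (t+1).val = _; rw [h1])
        have hlast_i : ∀ t : Fin (s1+2), t.val = s1+1 → l + e1 t = k := by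
          intro t ht
          have he : e1 t = k - l := Fin.ext (by show t.val = (k-l).val; omega)
          rw [he]; abel
        have hwrap : ∀ t : Fin (s1+2), t.val = s1+1 → t + 1 = 0 := by
          intro t ht
          have : t = Fin.last (s1+1) := Fin.ext (by simpa using ht)
          rw [this, Fin.last_add_one]
        have he10 : e1 0 = 0 := Fin.ext rfl
        have he11 : e1 1 = 1 := Fin.ext (by
          show (1 : Fin (s1+2)).val = (1 : Fin (s+2)).val
          simp [Fin.val_one])
        have hplus1 : ∀ t, x (i1 t) (j1 t) = 1 := fun t => hxp _
        have hminus1 : ∀ t, x (i1 t) (j1 (t+1)) = 0 := by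
          intro t
          show x (i (l + e1 t)) (j (l + e1 (t+1))) = 0
          by_cases ht : t.val + 1 < s1+2
          · rw [hsucc t ht, ← add_assoc]
            exact hxm (l + e1 t)
          · have htl : t.val = s1+1 := by have := t.isLt; omega
            rw [hwrap t htl, he10, add_zero, hlast_i t htl]
            exact hx0
        have hS1 : ∀ t, (i1 t, j1 t) ∈ S ∧ (i1 t, j1 (t+1)) ∈ S := by
          intro t
          refine ⟨hSp _, ?_⟩
          show (i (l + e1 t), j (l + e1 (t+1))) ∈ S
          by_cases ht : t.val + 1 < s1+2
          · rw [hsucc t ht, ← add_assoc]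
            exact hSm _
          · have htl : t.val = s1+1 := by have := t.isLt; omega
            rw [hwrap t htl, he10, add_zero, hlast_i t htl]
            exact hklS
        have hyplus1 : ∀ t, (i1 t, j1 t) ≠ (i k, j l) → y (i1 t) (j1 t) = 0 :=
          fun t _ => hyp _
        have hyminus1 : ∀ t, (i1 t, j1 (t+1)) ≠ (i k, j l) → y (i1 t) (j1 (t+1)) = 1 := by
          intro t hne
          show y (i (l + e1 t)) (j (l + e1 (t+1))) = 1
          by_cases ht : t.val + 1 < s1+2
          · rw [hsucc t ht, ← add_assoc]
            exact hym _
          · exfalso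
            have htl : t.val = s1+1 := by have := t.isLt; omega
            apply hne
            show (i (l + e1 t), j (l + e1 (t+1))) = (i k, j l)
            rw [hwrap t htl, he10, add_zero, hlast_i t htl]
        have hc1eq : ((i l, j l) : Fin I × Fin J) = (i1 0, j1 0) := by
          show _ = (i (l + e1 0), j (l + e1 0))
          rw [he10, add_zero]
        have hc2eq : ((i l, j (l+1)) : Fin I × Fin J) = (i1 0, j1 (0+1)) := by
          show _ = (i (l + e1 0), j (l + e1 (0+1)))
          rw [he10, add_zero, zero_add, he11]
        refine chord_step IH hx01 hy01 hxS hyS hrow hcol hN hi1 hj1 hS1 hplus1 hminus1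
          (i k, j l) (i l, j l) (i l, j (l+1)) hyplus1 hyminus1
          (Or.inl ⟨0, hc1eq, hyp l⟩) (Or.inr ⟨0, hc2eq, hym l⟩) ?_ ?_ ?_ ?_
        · intro h
          exact hlk (hi (congrArg Prod.fst h))
        · intro h
          exact hlk (hi (congrArg Prod.fst h))
        · intro h
          exact fin_succ_ne l (hj (congrArg Prod.snd h)).symm
        · have := (k - l).isLt
          omega
      · -- chord has x-value 1 : use the loop through rows k..l-1
        have h2val : 2 ≤ (l - k).val := by
          have h0 : (l - k).val ≠ 0 := fun h => hlk (sub_eq_zero.1 (Fin.ext h))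
          have h1 : (l - k).val ≠ 1 := by
            intro h
            have hlk' : l - k = 1 := Fin.ext (by
              rw [h]; show 1 = (1 : Fin (s+2)).val; rw [Fin.val_one])
            apply hlk1
            calc l = k + (l - k) := by abel
              _ = k + 1 := by rw [hlk']
          omega
        set s2 := (l - k).val - 2 with hs2def
        have hr2 : s2 + 2 = (l - k).val := by omega
        have hbd2 : ∀ t : Fin (s2+2), t.val < s + 2 := fun t => by
          have := t.isLt
          have := (l - k).isLt
          omega
        set e2 : Fin (s2+2) → Fin (s+2) := fun t => ⟨t.val, hbd2 t⟩ with he2def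
        set i2 : Fin (s2+2) → Fin I := fun t => i (k + e2 t) with hi2def
        set j2 : Fin (s2+2) → Fin J :=
          fun t => if t = 0 then j l else j (k + e2 t) with hj2def
        have hinj_e : ∀ t t' : Fin (s2+2), e2 t = e2 t' → t = t' := by
          intro t t' h
          have h2 := congrArg Fin.val h
          exact Fin.ext h2
        have hi2 : Function.Injective i2 :=
          fun t t' h => hinj_e _ _ (add_left_cancel (hi h))
        have hsucc : ∀ t : Fin (s2+2), t.val + 1 < s2 + 2 → e2 (t + 1) = e2 t + 1 := by
          intro t ht
          have h1 : (t+1).val = t.val + 1 := Fin.val_add_one_of_lt (by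
            rw [Fin.lt_iff_val_lt_val, Fin.val_last]; omega)
          have h2 : (e2 t + 1).val = t.val + 1 := by
            have : e2 t < Fin.last (s+1) := by
              rw [Fin.lt_iff_val_lt_val, Fin.val_last]
              show t.val < s + 1
              have := (l - k).isLt
              omega
            rw [Fin.val_add_one_of_lt this]
          exact Fin.ext (by rw [h2]; show (t+1).val = _; rw [h1])
        have hlast : ∀ t : Fin (s2+2), t.val = s2+1 → (k + e2 t) + 1 = l := by
          intro t ht
          have he : e2 t + 1 = l - k := by
            have h2 : (e2 t + 1).val = t.val + 1 := by
              have : e2 t < Fin.last (s+1) := by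
                rw [Fin.lt_iff_val_lt_val, Fin.val_last]
                show t.val < s + 1
                have := (l - k).isLt
                omega
              rw [Fin.val_add_one_of_lt this]
            exact Fin.ext (by rw [h2]; show t.val + 1 = (l - k).val; omega)
          calc k + e2 t + 1 = k + (e2 t + 1) := by abel
            _ = k + (l - k) := by rw [he]
            _ = l := by abel
        have hwrap : ∀ t : Fin (s2+2), t.val = s2+1 → t + 1 = 0 := by
          intro t ht
          have : t = Fin.last (s2+1) := Fin.ext (by simpa using ht)
          rw [this, Fin.last_add_one]
        have he20 : e2 0 = 0 := Fin.ext rfl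
        have he21 : e2 1 = 1 := Fin.ext (by
          show (1 : Fin (s2+2)).val = (1 : Fin (s+2)).val
          simp [Fin.val_one])
        have hone_ne : (1 : Fin (s2+2)) ≠ 0 := by
          intro h
          have := congrArg Fin.val h
          rw [Fin.val_one] at this
          exact one_ne_zero this
        have hj2 : Function.Injective j2 := by
          intro t t' h
          by_cases ht : t = 0 <;> by_cases ht' : t' = 0
          · rw [ht, ht']
          · exfalso
            rw [hj2def] at h
            simp only [ht, if_pos, if_neg ht'] at h
            have h4 : l = k + e2 t' := hj h
            have h5 : e2 t' = l - k := by rw [h4]; abel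
            have h6 := congrArg Fin.val h5
            have h7 : (e2 t').val = t'.val := rfl
            have := t'.isLt
            omega
          · exfalso
            rw [hj2def] at h
            simp only [ht', if_pos, if_neg ht] at h
            have h4 : l = k + e2 t := hj h.symm
            have h5 : e2 t = l - k := by rw [h4]; abel
            have h6 := congrArg Fin.val h5
            have h7 : (e2 t).val = t.val := rfl
            have := t.isLt
            omega
          · rw [hj2def] at h
            simp only [if_neg ht, if_neg ht'] at h
            exact hinj_e _ _ (add_left_cancel (hj h))
        have hplus2 : ∀ t, x (i2 t) (j2 t) = 1 := by
          intro t
          by_cases ht : t = 0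
          · rw [ht]
            show x (i (k + e2 0)) (if (0:Fin (s2+2)) = 0 then j l else _) = 1
            rw [if_pos rfl, he20, add_zero]
            exact hx1
          · show x (i (k + e2 t)) (if t = 0 then j l else j (k + e2 t)) = 1
            rw [if_neg ht]
            exact hxp _
        have hsuccne : ∀ t : Fin (s2+2), t.val + 1 < s2 + 2 → t + 1 ≠ 0 := by
          intro t ht h
          have h1 : (t+1).val = t.val + 1 := Fin.val_add_one_of_lt (by
            rw [Fin.lt_iff_val_lt_val, Fin.val_last]; omega)
          rw [h] at h1
          exact Nat.succ_ne_zero _ h1.symm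
        have hminus2 : ∀ t, x (i2 t) (j2 (t+1)) = 0 := by
          intro t
          show x (i (k + e2 t)) (if t + 1 = 0 then j l else j (k + e2 (t+1))) = 0
          by_cases ht : t.val + 1 < s2+2
          · rw [if_neg (hsuccne t ht), hsucc t ht, ← add_assoc]
            exact hxm (k + e2 t)
          · have htl : t.val = s2+1 := by have := t.isLt; omega
            rw [if_pos (hwrap t htl), ← hlast t htl]
            exact hxm (k + e2 t)
        have hS2 : ∀ t, (i2 t, j2 t) ∈ S ∧ (i2 t, j2 (t+1)) ∈ S := by
          intro t
          constructor
          · by_cases ht : t = 0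
            · rw [ht]
              show ((i (k + e2 0), if (0:Fin (s2+2)) = 0 then j l else _) : Fin I × Fin J) ∈ S
              rw [if_pos rfl, he20, add_zero]
              exact hklS
            · show ((i (k + e2 t), if t = 0 then j l else j (k + e2 t)) : Fin I × Fin J) ∈ S
              rw [if_neg ht]
              exact hSp _
          · show ((i (k + e2 t), if t + 1 = 0 then j l else j (k + e2 (t+1))) : Fin I × Fin J) ∈ S
            by_cases ht : t.val + 1 < s2+2
            · rw [if_neg (hsuccne t ht), hsucc t ht, ← add_assoc]
              exact hSm (k + e2 t)
            · have htl : t.val = s2+1 := by have := t.isLt; omega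
              rw [if_pos (hwrap t htl), ← hlast t htl]
              exact hSm (k + e2 t)
        have hyplus2 : ∀ t, (i2 t, j2 t) ≠ (i k, j l) → y (i2 t) (j2 t) = 0 := by
          intro t hne
          by_cases ht : t = 0
          · exfalso
            apply hne
            rw [ht]
            show ((i (k + e2 0), if (0:Fin (s2+2)) = 0 then j l else _) : Fin I × Fin J) = _
            rw [if_pos rfl, he20, add_zero]
          · show y (i (k + e2 t)) (if t = 0 then j l else j (k + e2 t)) = 0
            rw [if_neg ht]
            exact hyp _
        have hyminus2 : ∀ t, (i2 t, j2 (t+1)) ≠ (i k, j l) → y (i2 t) (j2 (t+1)) = 1 := by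
          intro t _
          show y (i (k + e2 t)) (if t + 1 = 0 then j l else j (k + e2 (t+1))) = 1
          by_cases ht : t.val + 1 < s2+2
          · rw [if_neg (hsuccne t ht), hsucc t ht, ← add_assoc]
            exact hym (k + e2 t)
          · have htl : t.val = s2+1 := by have := t.isLt; omega
            rw [if_pos (hwrap t htl), ← hlast t htl]
            exact hym (k + e2 t)
        have hzone : (0:Fin (s2+2)) + 1 = 1 := zero_add 1
        have hc1eq : ((i k, j (k+1)) : Fin I × Fin J) = (i2 0, j2 (0+1)) := by
          show _ = (i (k + e2 0), if (0:Fin (s2+2)) + 1 = 0 then j l else j (k + e2 (0+1)))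
          rw [hzone, if_neg hone_ne, he20, add_zero, he21]
        have hc2eq : ((i (k+1), j (k+1)) : Fin I × Fin J) = (i2 1, j2 1) := by
          show _ = (i (k + e2 1), if (1:Fin (s2+2)) = 0 then j l else j (k + e2 1))
          rw [if_neg hone_ne, he21]
        refine chord_step IH hx01 hy01 hxS hyS hrow hcol hN hi2 hj2 hS2 hplus2 hminus2
          (i k, j l) (i k, j (k+1)) (i (k+1), j (k+1)) hyplus2 hyminus2
          (Or.inr ⟨0, hc1eq, hym k⟩) (Or.inl ⟨1, hc2eq, hyp (k+1)⟩) ?_ ?_ ?_ ?_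
        · intro h
          exact hlk1 (hj (congrArg Prod.snd h)).symm
        · intro h
          exact fin_succ_ne k (hi (congrArg Prod.fst h))
        · intro h
          exact fin_succ_ne k (hi (congrArg Prod.fst h)).symm
        · have := (l - k).isLt
          omega
    · -- no chord : genuine df-1 move
      have hch' : ∀ k l, (i k, j l) ∈ S → l = k ∨ l = k + 1 := by
        intro k l hS'
        by_contra h
        push_neg at h
        exact hch ⟨k, l, hS', h.1, h.2⟩
      have rowcard : ∀ k, (Finset.univ.filter (fun l => (i k, j l) ∈ S)).card = 2 := by
        intro k
        have hset : Finset.univ.filter (fun l => (i k, j l) ∈ S) = {k, k+1} := by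
          ext l
          simp only [Finset.mem_filter, Finset.mem_univ, true_and, Finset.mem_insert,
            Finset.mem_singleton]
          constructor
          · exact hch' k l
          · rintro (h | h) <;> rw [h]
            exacts [hSp k, hSm k]
        rw [hset, Finset.card_insert_of_notMem (by
          simp only [Finset.mem_singleton]
          exact fun h => fin_succ_ne k h.symm), Finset.card_singleton]
      have colcard : ∀ l, (Finset.univ.filter (fun k => (i k, j l) ∈ S)).card = 2 := by
        intro l
        have hlsub : l - 1 + 1 = l := by abel
        have hset : Finset.univ.filter (fun k => (i k, j l) ∈ S) = {l, l - 1} := by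
          ext k
          simp only [Finset.mem_filter, Finset.mem_univ, true_and, Finset.mem_insert,
            Finset.mem_singleton]
          constructor
          · intro hS'
            rcases hch' k l hS' with rfl | h2
            · exact Or.inl rfl
            · right
              rw [h2]
              abel
          · rintro (h | h) <;> rw [h]
            · exact hSp l
            · have := hSm (l - 1)
              rw [hlsub] at this
              exact this
        rw [hset, Finset.card_insert_of_notMem (by
          simp only [Finset.mem_singleton]
          intro h
          apply fin_succ_ne (l - 1)
          rw [hlsub, ← h]), Finset.card_singleton]
      set x' : Fin I → Fin J → ℤ := fun a b => x a b - loop i j a b with hx'def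
      obtain ⟨h'01, h'S, h'p, h'm, h'off, h'row, h'col⟩ :=
        apply_loop hi hj hx01 hxS hxp hxm (fun k => ⟨hSp k, hSm k⟩) x' (fun a b => rfl)
      have hstep : df1Step S x x' := by
        refine ⟨h'01, h'S, loop i j,
          ⟨s, i, j, hi, hj, fun k => ⟨hSp k, hSm k⟩, rowcard, colcard, rfl⟩, Or.inr ?_⟩
        funext a b
        rfl
      have hm2 : (∑ c : Fin I × Fin J, (x' c.1 c.2 - y c.1 c.2).natAbs) < n := by
        have hlt : (∑ c : Fin I × Fin J, (x' c.1 c.2 - y c.1 c.2).natAbs)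
            < ∑ c : Fin I × Fin J, (x c.1 c.2 - y c.1 c.2).natAbs := by
          refine Finset.sum_lt_sum (fun c _ => ?_) ⟨(i 0, j 0), Finset.mem_univ _, ?_⟩
          · by_cases hp : ∃ t, c = (i t, j t)
            · obtain ⟨t, rfl⟩ := hp
              show (x' (i t) (j t) - y (i t) (j t)).natAbs
                ≤ (x (i t) (j t) - y (i t) (j t)).natAbs
              rw [h'p t, hyp t]
              simp
            · by_cases hm : ∃ t, c = (i t, j (t+1))
              · obtain ⟨t, rfl⟩ := hm
                show (x' (i t) (j (t+1)) - y (i t) (j (t+1))).natAbs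
                  ≤ (x (i t) (j (t+1)) - y (i t) (j (t+1))).natAbs
                rw [h'm t, hym t]
                simp
              · push_neg at hp hm
                have heq : x' c.1 c.2 = x c.1 c.2 :=
                  h'off c.1 c.2 (fun t ht => hp t (Prod.ext ht.1 ht.2))
                    (fun t ht => hm t (Prod.ext ht.1 ht.2))
                rw [heq]
          · show (x' (i 0) (j 0) - y (i 0) (j 0)).natAbs
              < (x (i 0) (j 0) - y (i 0) (j 0)).natAbs
            rw [h'p 0, hyp 0, hxp 0]
            simp
        omega
      exact Relation.ReflTransGen.head hstep
        (IH x' y h'01 hy01 h'S hyS (fun a => (h'row a).trans (hrow a))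
          (fun b => (h'col b).trans (hcol b)) hm2)
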